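/- (Syz(G) from Syz(L_G).) Let A be a quasi-commutative bijective σ-PBW extension, G = {g_1,…,g_t} a Gröbner basis, L_G = [lt(g_1) ⋯ lt(g_t)] the matrix of leading terms, and Z(L_G) a matrix of homogeneous generators of Syz(L_G). Let P be a matrix obtained by dividing each vector Z(L_G)^T G^T-combination by G, so that Z(L_G)^T G^T = P^T G^T with the division algorithm degree bounds. Then the column module of Z(L_G) − P equals Syz(G). -/

import Mathlib

/-!
Let `z` be a syzygy of `G` all of whose monomials `x^ξ lm(g_j)` are `⪯ X`, and let `z''` be its
part landing exactly on `X`. The coefficient of `X` in `∑ z_j g_j` only sees the leading terms of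
the `g_j`, so `z''` is a syzygy of `L_G`: `z'' = ∑ a_u Z_u`. Since the `Z_u` are homogeneous, the
degree-`X` parts `c_u` of the `a_u` still give `z'' = ∑ c_u Z_u`, and then
`z - ∑ c_u (Z_u - P_u) = (z - z'') + ∑ c_u P_u` is a syzygy whose monomials are all `≺ X`, by
the degree bound on `P`. Every monomial has only finitely many predecessors, so induction along the
monomial order applies.
-/

namespace SPBW

/-- Monomials of the free module `A^m` over a σ-PBW extension in `n` variables:
pairs `(α, i)` representing `x^α e_i`. -/
abbrev Mon (n m : ℕ) := (Fin n → ℕ) × Fin m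

/-- A presentation of the ring `A` as a σ-PBW (skew PBW) extension of `R`
in variables `x_1, …, x_n` (Definition 1 together with Theorem 6). -/
structure Ext (R A : Type*) [Ring R] [Ring A] (n : ℕ) where
  /-- the inclusion `R ⊆ A` -/
  φ : R →+* A
  inj : Function.Injective φ
  /-- the variables `x₁, …, xₙ` -/
  x : Fin n → A
  /-- the standard monomials `x^α = x₁^{α₁} ⋯ xₙ^{αₙ}` -/
  mono : (Fin n → ℕ) → A
  mono_def : ∀ α, mono α = (List.ofFn fun i => x i ^ α i).prod
  /-- coordinates of an element of `A` in the left `R`-basis `Mon(A)` -/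
  coord : A → ((Fin n → ℕ) →₀ R)
  coord_add : ∀ a b, coord (a + b) = coord a + coord b
  repr' : ∀ a : A, a = ((coord a).sum fun α r => φ r * mono α)
  coord_eq : ∀ (a : A) (cf : (Fin n → ℕ) →₀ R),
      a = (cf.sum fun α r => φ r * mono α) → coord a = cf
  /-- the injective endomorphisms `σ^α` of Proposition 2 / Theorem 6(a) -/
  σp : (Fin n → ℕ) → R →+* R
  σp_inj : ∀ α, Function.Injective (σp α)
  /-- the structure constants `c_{α,β}` of Theorem 6(b) -/
  cst : (Fin n → ℕ) → (Fin n → ℕ) → R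
  cst_left_inv : ∀ α β, ∃ c', c' * cst α β = 1
  /-- `x^α r = σ^α(r) x^α + p_{α,r}` with `p_{α,r}` of lower degree -/
  mono_mul_r : ∀ (α : Fin n → ℕ) (r : R), ∃ p : A,
      mono α * φ r = φ (σp α r) * mono α + p ∧
      (p = 0 ∨ ((coord p).support.sup fun β => ∑ i, β i) < ∑ i, α i)
  /-- `x^α x^β = c_{α,β} x^{α+β} + p_{α,β}` with `p_{α,β}` of lower degree -/
  mono_mul : ∀ α β : Fin n → ℕ, ∃ p : A,
      mono α * mono β = φ (cst α β) * mono (α + β) + p ∧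
      (p = 0 ∨ ((coord p).support.sup fun γ => ∑ i, γ i) < ∑ i, (α + β) i)

/-- A quasi-commutative σ-PBW extension: `x^α r = σ^α(r) x^α` and
`x^α x^β = c_{α,β} x^{α+β}` exactly (Remark 7(iii)). -/
structure QCExt (R A : Type*) [Ring R] [Ring A] (n : ℕ) extends Ext R A n where
  mono_mul_r' : ∀ (α : Fin n → ℕ) (r : R), mono α * φ r = φ (σp α r) * mono α
  mono_mul' : ∀ α β : Fin n → ℕ, mono α * mono β = φ (cst α β) * mono (α + β)

/-- A bijective quasi-commutative σ-PBW extension: moreover all `σ^α` are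
bijective and all structure constants `c_{α,β}` are invertible. -/
structure QCBijExt (R A : Type*) [Ring R] [Ring A] (n : ℕ) extends QCExt R A n where
  σp_bij : ∀ α, Function.Bijective (σp α)
  cst_unit : ∀ α β, IsUnit (cst α β)

/-- `le` is a monomial order on `Mon(A^m)` (Definition 15): a (total) order
compatible with multiplication by monomials, with `x^β x^α e_i ⪰ x^α e_i`,
and degree compatible. -/
structure IsMonomialOrder (n m : ℕ) (le : Mon n m → Mon n m → Prop) : Prop where
  refl : ∀ X, le X X
  trans : ∀ X Y Z, le X Y → le Y Z → le X Z
  antisymm : ∀ X Y, le X Y → le Y X → X = Y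
  total : ∀ X Y, le X Y ∨ le Y X
  mul_left : ∀ (α β : Fin n → ℕ) (i : Fin m), le (α, i) (β + α, i)
  compat : ∀ (α β : Fin n → ℕ) (i j : Fin m) (γ : Fin n → ℕ),
      le (α, i) (β, j) → le (γ + α, i) (γ + β, j)
  deg_compat : ∀ (α β : Fin n → ℕ) (i j : Fin m),
      (∑ k, α k) < ∑ k, β k → le (α, i) (β, j)

/-- `le` is a monomial order on `Mon(A)` (Definition 9). -/
structure IsMonomialOrderA (n : ℕ) (le : (Fin n → ℕ) → (Fin n → ℕ) → Prop) : Prop where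
  refl : ∀ α, le α α
  trans : ∀ α β γ, le α β → le β γ → le α γ
  antisymm : ∀ α β, le α β → le β α → α = β
  total : ∀ α β, le α β ∨ le β α
  add_compat : ∀ α β γ, le α β → le (γ + α) (γ + β)
  zero_le : ∀ α, le 0 α
  deg_compat : ∀ α β, (∑ i, α i) < ∑ i, β i → le α β

variable {R A : Type*} [Ring R] [Ring A] {n m : ℕ}

/-- `α` is the exponent of the leading monomial of `a ∈ A` w.r.t. the order `leA`. -/
def IsLMA (E : Ext R A n) (leA : (Fin n → ℕ) → (Fin n → ℕ) → Prop)
    (a : A) (α : Fin n → ℕ) : Prop :=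
  E.coord a α ≠ 0 ∧ ∀ β, E.coord a β ≠ 0 → leA β α

/-- `X` is the leading monomial of the vector `f ∈ A^m` w.r.t. the order `le`. -/
def IsLM (E : Ext R A n) (le : Mon n m → Mon n m → Prop)
    (f : Fin m → A) (X : Mon n m) : Prop :=
  E.coord (f X.2) X.1 ≠ 0 ∧
    ∀ (β : Fin n → ℕ) (v : Fin m), E.coord (f v) β ≠ 0 → le (β, v) X

/-- One step reduction `f →_F h` (Definition 20). -/
def Reduces (E : Ext R A n) (le : Mon n m → Mon n m → Prop)
    (F : Set (Fin m → A)) (f h : Fin m → A) : Prop :=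
  ∃ X : Mon n m, IsLM E le f X ∧
    ∃ (t : ℕ) (g : Fin t → Fin m → A) (r : Fin t → R)
      (a : Fin t → Fin n → ℕ) (β : Fin t → Fin n → ℕ),
      (∀ i, g i ∈ F) ∧
      (∀ i, IsLM E le (g i) (β i, X.2)) ∧
      (∀ i, a i + β i = X.1) ∧
      E.coord (f X.2) X.1 =
        ∑ i, r i * (E.σp (a i) (E.coord (g i X.2) (β i)) * E.cst (a i) (β i)) ∧
      h = f - ∑ i, (E.φ (r i) * E.mono (a i)) • g i

/-- `f` is reduced (minimal) w.r.t. `F`. -/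
def Reduced (E : Ext R A n) (le : Mon n m → Mon n m → Prop)
    (F : Set (Fin m → A)) (f : Fin m → A) : Prop :=
  f = 0 ∨ ¬ ∃ h, Reduces E le F f h

/-- `f →_F,+ h`: reduction in finitely many steps. -/
def ReducesStar (E : Ext R A n) (le : Mon n m → Mon n m → Prop)
    (F : Set (Fin m → A)) : (Fin m → A) → (Fin m → A) → Prop :=
  Relation.ReflTransGen (Reduces E le F)

/-- `G` is a Gröbner basis of the submodule `M ⊆ A^m` (Definition 25):
a finite set of nonzero vectors of `M` such that every nonzero `f ∈ M`
is reducible w.r.t. `G`. -/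
def IsGB (E : Ext R A n) (le : Mon n m → Mon n m → Prop)
    (M : Submodule A (Fin m → A)) (G : Finset (Fin m → A)) : Prop :=
  (↑G : Set (Fin m → A)) ⊆ (M : Set (Fin m → A)) \ {0} ∧
    ∀ f ∈ M, f ≠ 0 → ∃ h, Reduces E le (↑G) f h

end SPBW

theorem span_sub_le_ker_linearCombination {A ι κ M : Type*} [Ring A] [Fintype ι]
    [AddCommGroup M] [Module A M] {g : ι → M} {Z P : κ → ι → A}
    (hP : ∀ u, ∑ j, Z u j • g j = ∑ j, P u j • g j) :
    Submodule.span A (Set.range fun u => Z u - P u) ≤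
      LinearMap.ker (Fintype.linearCombination A g) :=
  Submodule.span_le.2 <| Set.range_subset_iff.2 fun u => by
    simp [Fintype.linearCombination_apply, sub_smul, Finset.sum_sub_distrib, hP u]

namespace SPBW

variable {R A : Type*} [Ring R] [Ring A] {n m : ℕ}

namespace IsMonomialOrder

variable {le : Mon n m → Mon n m → Prop}

theorem add_left_strict (hle : IsMonomialOrder n m le) {Y Y' : Mon n m} (h : le Y Y')
    (hne : Y ≠ Y') (ζ : Fin n → ℕ) :
    le (ζ + Y.1, Y.2) (ζ + Y'.1, Y'.2) ∧ (ζ + Y.1, Y.2) ≠ (ζ + Y'.1, Y'.2) :=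
  ⟨hle.compat _ _ _ _ _ h,
    fun h' => hne (Prod.ext (add_left_cancel (Prod.ext_iff.1 h').1) (Prod.ext_iff.1 h').2)⟩

theorem eq_of_le_of_add_le (hle : IsMonomialOrder n m le) {β ζ : Fin n → ℕ} {i : Fin m}
    {Y : Mon n m} (h : le (β, i) Y) (h' : le (ζ + Y.1, Y.2) (ζ + β, i)) :
    ((β, i) : Mon n m) = Y := by
  have := hle.antisymm _ _ h' (hle.compat _ _ _ _ ζ h)
  exact Prod.ext (add_left_cancel (Prod.ext_iff.1 this).1).symm (Prod.ext_iff.1 this).2.symm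

theorem finite_setOf_le (hle : IsMonomialOrder n m le) (X : Mon n m) :
    {Y | le Y X}.Finite := by
  refine ((Set.finite_Iic (fun _ => ∑ k, X.1 k)).prod Set.finite_univ).subset ?_
  rintro ⟨α, i⟩ hY
  refine ⟨fun k => ?_, trivial⟩
  have hdeg : ∑ k, α k ≤ ∑ k, X.1 k := by
    by_contra! hlt
    exact absurd (congrArg (fun Y : Mon n m => ∑ k, Y.1 k)
      (hle.antisymm _ _ hY (hle.deg_compat _ _ _ _ hlt))) hlt.ne'
  exact (Finset.single_le_sum (fun _ _ => Nat.zero_le _) (Finset.mem_univ k)).trans hdeg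

theorem ncard_setOf_le_lt (hle : IsMonomialOrder n m le) {X Y : Mon n m} (h : le X Y)
    (hne : X ≠ Y) :
    {Z | le Z X}.ncard < {Z | le Z Y}.ncard :=
  Set.ncard_lt_ncard ⟨fun _ hZ => hle.trans _ _ _ hZ h,
    fun hsub => hne (hle.antisymm _ _ h (hsub (hle.refl Y)))⟩ (hle.finite_setOf_le Y)

theorem wellFounded (hle : IsMonomialOrder n m le) :
    WellFounded fun X Y : Mon n m => le X Y ∧ X ≠ Y :=
  Subrelation.wf (fun h => hle.ncard_setOf_le_lt h.1 h.2)
    (measure fun X => {Z | le Z X}.ncard).wf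

theorem exists_max (hle : IsMonomialOrder n m le) {s : Set (Mon n m)} (hs : s.Finite)
    (hne : s.Nonempty) :
    ∃ X ∈ s, s ⊆ {Y | le Y X} := by
  obtain ⟨X, hX, hmax⟩ := Set.exists_max_image s (fun X => {Z | le Z X}.ncard) hs hne
  refine ⟨X, hX, fun Y hY => ?_⟩
  rcases hle.total Y X with h | h
  · exact h
  rcases eq_or_ne X Y with rfl | hXY
  · exact hle.refl X
  · exact absurd (hmax Y hY) (hle.ncard_setOf_le_lt h hXY).not_ge

end IsMonomialOrder

namespace Ext

variable (E : Ext R A n) {ι : Type*}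

noncomputable def coordHom : A →+ ((Fin n → ℕ) →₀ R) :=
  AddMonoidHom.mk' E.coord E.coord_add

@[simp]
theorem coordHom_apply (a : A) : E.coordHom a = E.coord a := rfl

@[simp]
theorem coord_zero : E.coord 0 = 0 := map_zero E.coordHom

theorem coord_sub (a b : A) : E.coord (a - b) = E.coord a - E.coord b :=
  map_sub E.coordHom a b

theorem coord_sum (s : Finset ι) (f : ι → A) :
    E.coord (∑ k ∈ s, f k) = ∑ k ∈ s, E.coord (f k) :=
  map_sum E.coordHom f s

theorem coord_injective : Function.Injective E.coord := fun a b h => by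
  rw [E.repr' a, E.repr' b, h]

theorem coord_eq_zero_iff {a : A} : E.coord a = 0 ↔ a = 0 :=
  ⟨fun h => E.coord_injective (h.trans E.coord_zero.symm), fun h => h ▸ E.coord_zero⟩

@[simp]
theorem coord_term (r : R) (α : Fin n → ℕ) :
    E.coord (E.φ r * E.mono α) = Finsupp.single α r :=
  E.coord_eq _ _ (by rw [Finsupp.sum_single_index (by simp)])

noncomputable def restrict (a : A) (p : (Fin n → ℕ) → Prop) [DecidablePred p] : A :=
  ((E.coord a).filter p).sum fun ξ r => E.φ r * E.mono ξ

theorem coord_restrict (a : A) (p : (Fin n → ℕ) → Prop) [DecidablePred p] :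
    E.coord (E.restrict a p) = (E.coord a).filter p :=
  E.coord_eq _ _ rfl

/-- For `w j = lm(g_j)` these are the monomials `lm(x^ξ lm(g_j))` with `x^ξ` running over the
terms of `z_j`; the paper's `X` for a syzygy `z` is the largest of them. -/
def shiftedSupport (w : ι → Mon n m) (z : ι → A) : Set (Mon n m) :=
  ⋃ j, (fun ξ => (ξ + (w j).1, (w j).2)) '' ↑(E.coord (z j)).support

variable {E}

theorem mem_shiftedSupport {w : ι → Mon n m} {z : ι → A} {Y : Mon n m} :
    Y ∈ E.shiftedSupport w z ↔
      ∃ j ξ, E.coord (z j) ξ ≠ 0 ∧ (ξ + (w j).1, (w j).2) = Y := by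
  simp [shiftedSupport]

theorem shiftedSupport_finite [Finite ι] (w : ι → Mon n m) (z : ι → A) :
    (E.shiftedSupport w z).Finite :=
  Set.finite_iUnion fun _ => (Finset.finite_toSet _).image _

theorem shiftedSupport_nonempty {w : ι → Mon n m} {z : ι → A} (hz : z ≠ 0) :
    (E.shiftedSupport w z).Nonempty := by
  obtain ⟨j, hj⟩ := Function.ne_iff.1 hz
  obtain ⟨ξ, hξ⟩ := Finsupp.support_nonempty_iff.2 (mt E.coord_eq_zero_iff.1 hj)
  exact ⟨_, mem_shiftedSupport.2 ⟨j, ξ, Finsupp.mem_support_iff.1 hξ, rfl⟩⟩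

theorem shiftedSupport_add_subset (w : ι → Mon n m) (z z' : ι → A) :
    E.shiftedSupport w (z + z') ⊆ E.shiftedSupport w z ∪ E.shiftedSupport w z' := by
  intro Y hY
  obtain ⟨j, ξ, hξ, rfl⟩ := mem_shiftedSupport.1 hY
  rw [Pi.add_apply, E.coord_add, Finsupp.add_apply] at hξ
  by_cases h : E.coord (z j) ξ = 0
  · exact Or.inr (mem_shiftedSupport.2 ⟨j, ξ, by simpa [h] using hξ, rfl⟩)
  · exact Or.inl (mem_shiftedSupport.2 ⟨j, ξ, h, rfl⟩)

theorem shiftedSupport_sum_subset {κ : Type*} (w : ι → Mon n m) {s : Finset κ}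
    {f : κ → ι → A} {S : Set (Mon n m)} (h : ∀ u ∈ s, E.shiftedSupport w (f u) ⊆ S) :
    E.shiftedSupport w (∑ u ∈ s, f u) ⊆ S :=
  Finset.sum_induction _ (fun z => E.shiftedSupport w z ⊆ S)
    (fun _ _ hz hz' => (shiftedSupport_add_subset w _ _).trans (Set.union_subset hz hz'))
    (by simp [shiftedSupport]) h

variable (E)

noncomputable def component (w : ι → Mon n m) (X : Mon n m) (z : ι → A) : ι → A :=
  fun j => E.restrict (z j) fun ξ => (ξ + (w j).1, (w j).2) = X

variable {E}

theorem shiftedSupport_sub_component_subset (w : ι → Mon n m) (X : Mon n m) (z : ι → A) :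
    E.shiftedSupport w (z - E.component w X z) ⊆ E.shiftedSupport w z \ {X} := by
  intro Y hY
  obtain ⟨j, ξ, hξ, rfl⟩ := mem_shiftedSupport.1 hY
  rw [Pi.sub_apply, coord_sub, component, coord_restrict, Finsupp.sub_apply,
    Finsupp.filter_apply] at hξ
  split_ifs at hξ with h
  · exact absurd (sub_self _) hξ
  · exact ⟨mem_shiftedSupport.2 ⟨j, ξ, by simpa using hξ, rfl⟩, h⟩

theorem coord_component_ne_zero {w : ι → Mon n m} {X : Mon n m} {z : ι → A} {j : ι}
    {ξ : Fin n → ℕ} (h : E.coord (E.component w X z j) ξ ≠ 0) :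
    (ξ + (w j).1, (w j).2) = X := by
  rw [component, coord_restrict, Finsupp.filter_apply] at h
  exact of_not_not fun hX => h (if_neg hX)

@[simp]
theorem component_component (w : ι → Mon n m) (X : Mon n m) (z : ι → A) :
    E.component w X (E.component w X z) = E.component w X z := by
  funext j
  refine E.coord_injective ?_
  rw [component, coord_restrict, Finsupp.filter_eq_self_iff]
  exact fun _ => coord_component_ne_zero

variable (E)

def leadingTerm (f : Fin m → A) (Y : Mon n m) : Fin m → A :=
  fun v => if v = Y.2 then E.φ (E.coord (f Y.2) Y.1) * E.mono Y.1 else 0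

theorem eq_zero_or_exists_shiftedSupport_subset [Finite ι]
    {le : Mon n m → Mon n m → Prop} (hle : IsMonomialOrder n m le) (w : ι → Mon n m)
    (z : ι → A) :
    z = 0 ∨ ∃ X ∈ E.shiftedSupport w z, E.shiftedSupport w z ⊆ {Y | le Y X} :=
  (eq_or_ne z 0).imp_right fun hz =>
    hle.exists_max (shiftedSupport_finite w z) (shiftedSupport_nonempty hz)

end Ext

namespace QCExt

variable (E : QCExt R A n)

theorem term_mul_term (r s : R) (ξ β : Fin n → ℕ) :
    (E.φ r * E.mono ξ) * (E.φ s * E.mono β) =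
      E.φ (r * E.σp ξ s * E.cst ξ β) * E.mono (ξ + β) := by
  calc (E.φ r * E.mono ξ) * (E.φ s * E.mono β)
      = E.φ r * (E.mono ξ * E.φ s) * E.mono β := by simp only [mul_assoc]
    _ = E.φ r * E.φ (E.σp ξ s) * (E.mono ξ * E.mono β) := by
        rw [E.mono_mul_r']; simp only [mul_assoc]
    _ = _ := by rw [E.mono_mul', map_mul, map_mul]; simp only [mul_assoc]

theorem coord_mul (a b : A) :
    E.coord (a * b) = (E.coord a).sum fun ξ r => (E.coord b).sum fun β s =>
      Finsupp.single (ξ + β) (r * E.σp ξ s * E.cst ξ β) := by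
  conv_lhs => rw [E.repr' a, E.repr' b]
  rw [Finsupp.sum_mul, ← Ext.coordHom_apply, map_finsuppSum]
  refine Finsupp.sum_congr fun ξ _ => ?_
  rw [Finsupp.mul_sum, map_finsuppSum]
  refine Finsupp.sum_congr fun β _ => ?_
  rw [term_mul_term, Ext.coordHom_apply, Ext.coord_term]

theorem coord_mul_term (a : A) (c : R) (β : Fin n → ℕ) :
    E.coord (a * (E.φ c * E.mono β)) = (E.coord a).sum fun ξ r =>
      Finsupp.single (ξ + β) (r * E.σp ξ c * E.cst ξ β) := by
  rw [coord_mul, Ext.coord_term]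
  exact Finsupp.sum_congr fun ξ _ => Finsupp.sum_single_index (by simp)

theorem exists_of_coord_mul_ne_zero {a b : A} {γ : Fin n → ℕ} (h : E.coord (a * b) γ ≠ 0) :
    ∃ ξ β, E.coord a ξ ≠ 0 ∧ E.coord b β ≠ 0 ∧ ξ + β = γ := by
  rw [coord_mul, Finsupp.sum_apply] at h
  obtain ⟨ξ, hξ, h⟩ := Finset.exists_ne_zero_of_sum_ne_zero h
  simp only [Finsupp.sum_apply] at h
  obtain ⟨β, hβ, h⟩ := Finset.exists_ne_zero_of_sum_ne_zero h
  exact ⟨ξ, β, Finsupp.mem_support_iff.1 hξ, Finsupp.mem_support_iff.1 hβ,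
    by_contra fun hne => h (Finsupp.single_eq_of_ne (Ne.symm hne))⟩

theorem coord_restrict_mul_term (a : A) (p : (Fin n → ℕ) → Prop) [DecidablePred p]
    (c : R) (β : Fin n → ℕ) :
    E.coord (E.restrict a (fun ξ => p (ξ + β)) * (E.φ c * E.mono β)) =
      (E.coord (a * (E.φ c * E.mono β))).filter p := by
  rw [coord_mul_term, coord_mul_term, Ext.coord_restrict, Finsupp.sum_filter_index,
    Finsupp.support_filter, Finset.sum_filter, Finsupp.sum, Finsupp.filter_sum]
  refine Finset.sum_congr rfl fun ξ _ => ?_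
  split_ifs with h
  · rw [Finsupp.filter_single_of_pos _ h]
  · rw [Finsupp.filter_single_of_neg _ h]

variable {E} {le : Mon n m → Mon n m → Prop}

theorem mem_shiftedSupport_smul {ι : Type*} {w : ι → Mon n m} {c : A} {z : ι → A}
    {Y : Mon n m} (hY : Y ∈ E.shiftedSupport w (c • z)) :
    ∃ ζ, E.coord c ζ ≠ 0 ∧ ∃ Y' ∈ E.shiftedSupport w z, Y = (ζ + Y'.1, Y'.2) := by
  obtain ⟨j, γ, hγ, rfl⟩ := Ext.mem_shiftedSupport.1 hY
  obtain ⟨ζ, β, hζ, hβ, rfl⟩ := E.exists_of_coord_mul_ne_zero hγ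
  exact ⟨ζ, hζ, _, Ext.mem_shiftedSupport.2 ⟨j, β, hβ, rfl⟩, by simp [add_assoc]⟩

/-- A term of `a` and a term of `f X.2` whose product lands on `x^X` must use the leading monomial
of `f`: by compatibility and antisymmetry of the order. -/
theorem coord_mul_leadingTerm (hle : IsMonomialOrder n m le) {f : Fin m → A} {Y : Mon n m}
    (hf : IsLM E.toExt le f Y) {a : A} {X : Mon n m}
    (ha : ∀ ζ, E.coord a ζ ≠ 0 → le (ζ + Y.1, Y.2) X) :
    E.coord (a * f X.2) X.1 = E.coord (a * E.leadingTerm f Y X.2) X.1 := by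
  have key : ∀ ζ β, E.coord a ζ ≠ 0 → E.coord (f X.2) β ≠ 0 → ζ + β = X.1 →
      ((β, X.2) : Mon n m) = Y := fun ζ β hζ hβ hX =>
    hle.eq_of_le_of_add_le (hf.2 β X.2 hβ) (by rw [hX]; exact ha ζ hζ)
  rw [coord_mul, Finsupp.sum_apply, Ext.leadingTerm]
  split_ifs with hv
  · rw [coord_mul_term, Finsupp.sum_apply]
    refine Finsupp.sum_congr fun ζ hζ => ?_
    rw [Finsupp.sum_apply, Finsupp.sum, Finset.sum_eq_single Y.1, hv]
    · intro β hβ hne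
      exact Finsupp.single_eq_of_ne fun h => hne (Prod.ext_iff.1 (key ζ β
        (Finsupp.mem_support_iff.1 hζ) (Finsupp.mem_support_iff.1 hβ) h.symm)).1
    · intro hY
      rw [Finsupp.notMem_support_iff.1 hY, map_zero, mul_zero, zero_mul, Finsupp.single_zero,
        Finsupp.zero_apply]
  · rw [mul_zero, Ext.coord_zero, Finsupp.zero_apply]
    refine Finset.sum_eq_zero fun ζ hζ => ?_
    simp only [Finsupp.sum_apply]
    refine Finset.sum_eq_zero fun β hβ => Finsupp.single_eq_of_ne fun h => hv ?_
    exact (Prod.ext_iff.1 (key ζ β (Finsupp.mem_support_iff.1 hζ)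
      (Finsupp.mem_support_iff.1 hβ) h.symm)).2

theorem coord_restrict_mul_leadingTerm (a : A) (f : Fin m → A) (Y X : Mon n m) (v : Fin m) :
    E.coord (E.restrict a (fun ξ => (ξ + Y.1, Y.2) = X) * E.leadingTerm f Y v) =
      (E.coord (a * E.leadingTerm f Y v)).filter fun γ => (γ, v) = X := by
  rw [Ext.leadingTerm]
  split_ifs with hv
  · subst hv
    exact E.coord_restrict_mul_term a (fun γ => (γ, Y.2) = X) _ _
  · simp only [mul_zero, Ext.coord_zero, Finsupp.filter_zero]

theorem sum_component_smul_of_homogeneous {ι κ : Type*} [Fintype κ] {w : ι → Mon n m}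
    {d : κ → Mon n m} {Z : κ → ι → A}
    (hZ : ∀ u j, Z u j ≠ 0 →
      ∃ r α, Z u j = E.φ r * E.mono α ∧ (α + (w j).1, (w j).2) = d u)
    (X : Mon n m) (a : κ → A) :
    ∑ u, E.component d X a u • Z u = E.component w X (∑ u, a u • Z u) := by
  funext j
  refine E.coord_injective ?_
  simp only [Finset.sum_apply, Pi.smul_apply, smul_eq_mul, Ext.coord_sum, Ext.component,
    Ext.coord_restrict, Finsupp.filter_sum]
  refine Finset.sum_congr rfl fun u _ => ?_
  by_cases h0 : Z u j = 0
  · simp only [h0, mul_zero, Ext.coord_zero, Finsupp.filter_zero]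
  obtain ⟨r, α, hZuj, hd⟩ := hZ u j h0
  simp only [hZuj, ← hd, ← add_assoc]
  exact E.coord_restrict_mul_term _ (fun γ => (γ + (w j).1, (w j).2) = X) _ _

variable {t : ℕ} {g : Fin t → Fin m → A} {Xg : Fin t → Mon n m}

theorem sum_component_smul_leadingTerm_eq_zero (hle : IsMonomialOrder n m le)
    (hXg : ∀ j, IsLM E.toExt le (g j) (Xg j)) {z : Fin t → A} (hz : ∑ j, z j • g j = 0)
    {X : Mon n m} (hzX : E.shiftedSupport Xg z ⊆ {Y | le Y X}) :
    ∑ j, E.component Xg X z j • E.leadingTerm (g j) (Xg j) = 0 := by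
  funext v
  refine E.coord_injective ?_
  simp only [Finset.sum_apply, Pi.smul_apply, smul_eq_mul, Pi.zero_apply, Ext.coord_zero,
    Ext.coord_sum, Ext.component, coord_restrict_mul_leadingTerm, ← Finsupp.filter_sum,
    Finsupp.filter_eq_zero_iff]
  rintro γ rfl
  rw [Finsupp.finsetSum_apply]
  calc ∑ j, E.coord (z j * E.leadingTerm (g j) (Xg j) v) γ
      = ∑ j, E.coord (z j * g j v) γ := Finset.sum_congr rfl fun j _ =>
        (coord_mul_leadingTerm hle (hXg j) fun ζ hζ =>
          hzX (Ext.mem_shiftedSupport.2 ⟨j, ζ, hζ, rfl⟩)).symm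
    _ = E.coord ((∑ j, z j • g j) v) γ := by
        simp [Finset.sum_apply, Ext.coord_sum, Finsupp.finsetSum_apply]
    _ = 0 := by rw [hz, Pi.zero_apply, Ext.coord_zero, Finsupp.zero_apply]

variable {l : ℕ} {Z P : Fin l → Fin t → A} {d : Fin l → Mon n m}

theorem exists_mem_span_shiftedSupport_sub_lt (hle : IsMonomialOrder n m le)
    (hXg : ∀ j, IsLM E.toExt le (g j) (Xg j))
    (hZ : ∀ b, ∑ j, b j • E.leadingTerm (g j) (Xg j) = 0 →
      b ∈ Submodule.span A (Set.range Z))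
    (hhom : ∀ u j, Z u j ≠ 0 →
      ∃ r α, Z u j = E.φ r * E.mono α ∧ (α + (Xg j).1, (Xg j).2) = d u)
    (hPdeg : ∀ u, E.shiftedSupport Xg (P u) ⊆ {Y | le Y (d u) ∧ Y ≠ d u})
    {z : Fin t → A} (hz : ∑ j, z j • g j = 0)
    {X : Mon n m} (hzX : E.shiftedSupport Xg z ⊆ {Y | le Y X}) :
    ∃ w ∈ Submodule.span A (Set.range fun u => Z u - P u),
      E.shiftedSupport Xg (z - w) ⊆ {Y | le Y X ∧ Y ≠ X} := by
  obtain ⟨a, ha⟩ := (Submodule.mem_span_range_iff_exists_fun A).1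
    (hZ _ (sum_component_smul_leadingTerm_eq_zero hle hXg hz hzX))
  set c := E.component d X a
  refine ⟨∑ u, c u • (Z u - P u), Submodule.sum_mem _ fun u _ =>
    Submodule.smul_mem _ _ (Submodule.subset_span ⟨u, rfl⟩), ?_⟩
  have hcZ : ∑ u, c u • Z u = E.component Xg X z := by
    rw [sum_component_smul_of_homogeneous hhom, ha, Ext.component_component]
  have hsplit : z - ∑ u, c u • (Z u - P u) = (z - E.component Xg X z) + ∑ u, c u • P u := by
    rw [← hcZ]
    simp only [smul_sub, Finset.sum_sub_distrib]
    abel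
  rw [hsplit]
  refine (Ext.shiftedSupport_add_subset _ _ _).trans (Set.union_subset ?_ ?_)
  · exact (Ext.shiftedSupport_sub_component_subset _ _ _).trans
      fun Y ⟨hY, hYX⟩ => ⟨hzX hY, hYX⟩
  · refine Ext.shiftedSupport_sum_subset _ fun u _ Y hY => ?_
    obtain ⟨ζ, hζ, Y', hY', rfl⟩ := mem_shiftedSupport_smul hY
    rw [← Ext.coord_component_ne_zero hζ]
    exact hle.add_left_strict (hPdeg u hY').1 (hPdeg u hY').2 ζ

theorem ker_linearCombination_eq_span (hle : IsMonomialOrder n m le)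
    (hXg : ∀ j, IsLM E.toExt le (g j) (Xg j))
    (hZ : ∀ b, ∑ j, b j • E.leadingTerm (g j) (Xg j) = 0 →
      b ∈ Submodule.span A (Set.range Z))
    (hhom : ∀ u j, Z u j ≠ 0 →
      ∃ r α, Z u j = E.φ r * E.mono α ∧ (α + (Xg j).1, (Xg j).2) = d u)
    (hP : ∀ u, ∑ j, Z u j • g j = ∑ j, P u j • g j)
    (hPdeg : ∀ u, E.shiftedSupport Xg (P u) ⊆ {Y | le Y (d u) ∧ Y ≠ d u}) :
    LinearMap.ker (Fintype.linearCombination A g) =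
      Submodule.span A (Set.range fun u => Z u - P u) := by
  refine le_antisymm (fun z hz => ?_) (span_sub_le_ker_linearCombination hP)
  suffices h : ∀ X, ∀ z ∈ LinearMap.ker (Fintype.linearCombination A g),
      E.shiftedSupport Xg z ⊆ {Y | le Y X} →
      z ∈ Submodule.span A (Set.range fun u => Z u - P u) by
    rcases E.eq_zero_or_exists_shiftedSupport_subset hle Xg z with rfl | ⟨X, -, hzX⟩
    · exact zero_mem _
    · exact h X z hz hzX
  intro X
  induction X using hle.wellFounded.induction with
  | _ X ih =>
  intro z hz hzX
  obtain ⟨w, hw, hzw⟩ := exists_mem_span_shiftedSupport_sub_lt hle hXg hZ hhom hPdeg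
    (by simpa [Fintype.linearCombination_apply] using hz) hzX
  rw [← sub_add_cancel z w]
  refine add_mem ?_ hw
  rcases E.eq_zero_or_exists_shiftedSupport_subset hle Xg (z - w) with h0 | ⟨X', hX', hsub⟩
  · rw [h0]
    exact zero_mem _
  · exact ih X' (hzw hX') _ (sub_mem hz (span_sub_le_ker_linearCombination hP hw)) hsub

end QCExt

end SPBW

open SPBW in
theorem syzygy_of_G_from_leading_terms_general
    (R A : Type*) [Ring R] [Ring A] (n m : ℕ)
    (E : SPBW.QCBijExt R A n)
    (le : Mon n m → Mon n m → Prop) (hle : IsMonomialOrder n m le)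
    (t l : ℕ) (g : Fin t → Fin m → A)
    -- leading monomials of the `g_j`
    (Xg : Fin t → Mon n m) (hXg : ∀ j, IsLM E.toExt le (g j) (Xg j))
    -- the columns of `L_G`: the leading terms `lt(g_j)`
    (ltg : Fin t → Fin m → A)
    (hltg : ∀ j, ltg j = fun v =>
      if v = (Xg j).2 then
        E.φ (E.coord (g j (Xg j).2) (Xg j).1) * E.mono (Xg j).1
      else 0)
    -- the columns of `Z(L_G)` generate `Syz(L_G)` …
    (Z : Fin l → Fin t → A)
    (hZ : ∀ b : Fin t → A,
      (∑ j, b j • ltg j) = 0 ↔ b ∈ Submodule.span A (Set.range Z))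
    -- … and are homogeneous, of degrees `d v`
    (d : Fin l → Mon n m)
    (hhom : ∀ v j,
      (∃ (r : R) (α : Fin n → ℕ), Z v j = E.φ r * E.mono α) ∧
      (Z v j ≠ 0 → ∃ (r : R) (α : Fin n → ℕ), r ≠ 0 ∧
        Z v j = E.φ r * E.mono α ∧ (α + (Xg j).1, (Xg j).2) = d v))
    -- `P` divides the combinations `Z(L_G)^T G^T` by `G` : `Z(L_G)^T G^T = P^T G^T`
    (P : Fin l → Fin t → A)
    (hP : ∀ v, (∑ j, Z v j • g j) = ∑ j, P v j • g j)
    -- with the division-algorithm degree bounds: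
    -- `max_j lm(lm(p_j) lm(g_j)) ≺ d v`
    (hPdeg : ∀ (v : Fin l) (j : Fin t) (ξ : Fin n → ℕ),
      E.coord (P v j) ξ ≠ 0 →
        le (ξ + (Xg j).1, (Xg j).2) (d v) ∧ (ξ + (Xg j).1, (Xg j).2) ≠ d v) :
    ∀ z : Fin t → A,
      (∑ j, z j • g j) = 0 ↔
        z ∈ Submodule.span A (Set.range fun v => Z v - P v) := by
  intro z
  have hZ' : ∀ b, ∑ j, b j • E.leadingTerm (g j) (Xg j) = 0 →
      b ∈ Submodule.span A (Set.range Z) := fun b hb => (hZ b).1 (by rwa [funext hltg])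
  have hhom' : ∀ v j, Z v j ≠ 0 →
      ∃ r α, Z v j = E.φ r * E.mono α ∧ (α + (Xg j).1, (Xg j).2) = d v :=
    fun v j hv => ((hhom v j).2 hv).imp fun _ ⟨α, _, hα⟩ => ⟨α, hα⟩
  have hPdeg' : ∀ v, E.shiftedSupport Xg (P v) ⊆ {Y | le Y (d v) ∧ Y ≠ d v} := by
    intro v Y hY
    obtain ⟨j, ξ, hξ, rfl⟩ := Ext.mem_shiftedSupport.1 hY
    exact hPdeg v j ξ hξ
  rw [← Fintype.linearCombination_apply, ← LinearMap.mem_ker,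
    E.toQCExt.ker_linearCombination_eq_span hle hXg hZ' hhom' hP hPdeg']

open SPBW in
/-- **(Lemma 39.)** Let `A` be a quasi-commutative bijective σ-PBW extension,
`G = {g₁, …, g_t}` a Gröbner basis, `L_G = [lt(g₁) ⋯ lt(g_t)]` the matrix of
leading terms, and `Z(L_G)` a matrix of homogeneous generators of `Syz(L_G)`. Let
`P` be obtained by dividing each combination `Z(L_G)^T G^T` by `G`, so that
`Z(L_G)^T G^T = P^T G^T` with the division-algorithm degree bounds. Then the
column module of `Z(L_G) − P` equals `Syz(G)`. -/
theorem syzygy_of_G_from_leading_terms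
    (R A : Type*) [Ring R] [Ring A] (n m : ℕ)
    (E : SPBW.QCBijExt R A n)
    (le : Mon n m → Mon n m → Prop) (hle : IsMonomialOrder n m le)
    (t l : ℕ) (g : Fin t → Fin m → A) (hg0 : ∀ j, g j ≠ 0)
    -- `G` is a Gröbner basis (of the module it generates)
    (hGB : ∀ h ∈ Submodule.span A (Set.range g), h ≠ 0 →
      ∃ h', Reduces E.toExt le (Set.range g) h h')
    -- leading monomials of the `g_j`
    (Xg : Fin t → Mon n m) (hXg : ∀ j, IsLM E.toExt le (g j) (Xg j))
    -- the columns of `L_G`: the leading terms `lt(g_j)`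
    (ltg : Fin t → Fin m → A)
    (hltg : ∀ j, ltg j = fun v =>
      if v = (Xg j).2 then
        E.φ (E.coord (g j (Xg j).2) (Xg j).1) * E.mono (Xg j).1
      else 0)
    -- the columns of `Z(L_G)` generate `Syz(L_G)` …
    (Z : Fin l → Fin t → A)
    (hZ : ∀ b : Fin t → A,
      (∑ j, b j • ltg j) = 0 ↔ b ∈ Submodule.span A (Set.range Z))
    -- … and are homogeneous, of degrees `d v`
    (d : Fin l → Mon n m)
    (hhom : ∀ v j,
      (∃ (r : R) (α : Fin n → ℕ), Z v j = E.φ r * E.mono α) ∧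
      (Z v j ≠ 0 → ∃ (r : R) (α : Fin n → ℕ), r ≠ 0 ∧
        Z v j = E.φ r * E.mono α ∧ (α + (Xg j).1, (Xg j).2) = d v))
    -- `P` divides the combinations `Z(L_G)^T G^T` by `G` : `Z(L_G)^T G^T = P^T G^T`
    (P : Fin l → Fin t → A)
    (hP : ∀ v, (∑ j, Z v j • g j) = ∑ j, P v j • g j)
    -- with the division-algorithm degree bounds:
    -- `max_j lm(lm(p_j) lm(g_j)) ≺ d v`
    (hPdeg : ∀ (v : Fin l) (j : Fin t) (ξ : Fin n → ℕ),
      E.coord (P v j) ξ ≠ 0 →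
        le (ξ + (Xg j).1, (Xg j).2) (d v) ∧ (ξ + (Xg j).1, (Xg j).2) ≠ d v) :
    ∀ z : Fin t → A,
      (∑ j, z j • g j) = 0 ↔
        z ∈ Submodule.span A (Set.range fun v => Z v - P v) :=
  syzygy_of_G_from_leading_terms_general R A n m E le hle t l g Xg hXg ltg hltg Z hZ d hhom P hP
    hPdeg
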